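/- arXiv:2503.16230 — 4 statements merged into one kernel-verified Lean document; each statement's English description precedes it below -/
import Mathlib

section
/- Let p > 1. There exists a constant C > 0 such that for all positive integers N' < N, ∫_0^∞ e^(-α) α^(p-1) |1/(1 - e^(-αN)) - 1/(1 - e^(-αN'))| dα ≤ C · N'^(-p). -/
open MeasureTheory Real Set

lemma aux_pos {t : ℝ} (ht : 0 < t) : 0 < 1 - Real.exp (-t) := by
  have : Real.exp (-t) < 1 := Real.exp_lt_one_iff.mpr (by linarith)
  linarith

lemma aux_tail {t : ℝ} (ht : 0 < t) :
    Real.exp (-t) / (1 - Real.exp (-t)) ≤ 1 / t := by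
  have h1 := aux_pos ht
  rw [div_le_div_iff₀ h1 ht]
  have h2 : Real.exp (-t) * Real.exp t = 1 := by rw [← Real.exp_add]; simp
  nlinarith [Real.add_one_le_exp t, Real.exp_pos (-t)]

lemma aux_diff {s t : ℝ} (hs : 0 < s) (hst : s ≤ t) :
    |1 / (1 - Real.exp (-t)) - 1 / (1 - Real.exp (-s))| ≤
      Real.exp (-s) / (1 - Real.exp (-s)) := by
  have h1 := aux_pos hs
  have h2 := aux_pos (lt_of_lt_of_le hs hst)
  have h3 : 1 - Real.exp (-s) ≤ 1 - Real.exp (-t) := by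
    have := Real.exp_le_exp.mpr (neg_le_neg hst); linarith
  have h4 : 1 / (1 - Real.exp (-t)) ≤ 1 / (1 - Real.exp (-s)) :=
    one_div_le_one_div_of_le h1 h3
  have h5 : 1 ≤ 1 / (1 - Real.exp (-t)) :=
    one_le_one_div h2 (by nlinarith [Real.exp_pos (-t)])
  rw [abs_of_nonpos (by linarith)]
  have h6 : 1 / (1 - Real.exp (-s)) - 1 = Real.exp (-s) / (1 - Real.exp (-s)) := by
    field_simp
    ring
  linarith

theorem integral_diff_estimate (p : ℝ) (hp : 1 < p) :
    ∃ C : ℝ, 0 < C ∧ ∀ N N' : ℕ, 0 < N' → N' < N →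
      (∫ α in Set.Ioi (0 : ℝ),
          Real.exp (-α) * α ^ (p - 1) *
            |1 / (1 - Real.exp (-α * N)) - 1 / (1 - Real.exp (-α * N'))|) ≤
        C * (N' : ℝ) ^ (-p) := by
  have hp1 : 0 < p - 1 := by linarith
  have hp0 : 0 < p := by linarith
  have hc0 : 0 < 1 - Real.exp (-1) := aux_pos one_pos
  have hΓ : 0 < Real.Gamma p := Real.Gamma_pos_of_pos hp0
  refine ⟨1 / (p - 1) + Real.Gamma p / (1 - Real.exp (-1)),
    add_pos (div_pos one_pos hp1) (div_pos hΓ hc0), ?_⟩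
  intro N N' hN' hNN'
  set n : ℝ := (N' : ℝ) with hn_def
  have hn1 : 1 ≤ n := Nat.one_le_cast.mpr hN'
  have hn0 : 0 < n := lt_of_lt_of_le one_pos hn1
  set b : ℝ := 1 / n with hb_def
  have hb : 0 < b := by positivity
  set f : ℝ → ℝ := fun α => Real.exp (-α) * α ^ (p - 1) *
      |1 / (1 - Real.exp (-α * N)) - 1 / (1 - Real.exp (-α * N'))| with hf_def
  have hfm : Measurable f := by
    apply Measurable.mul
    apply Measurable.mul
    · exact (measurable_neg.exp)
    · exact (measurable_id.pow_const _)
    · apply Measurable.abs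
      apply Measurable.sub <;>
      · apply Measurable.div measurable_const
        exact measurable_const.sub ((measurable_id.neg.mul_const _).exp)
  -- pointwise bound via the single-variable function
  have hkey : ∀ α : ℝ, 0 < α →
      |1 / (1 - Real.exp (-α * N)) - 1 / (1 - Real.exp (-α * N'))| ≤
        Real.exp (-(α * n)) / (1 - Real.exp (-(α * n))) := by
    intro α hα
    have hs : 0 < α * n := mul_pos hα hn0
    have hst : α * n ≤ α * (N : ℝ) := by
      have : (n : ℝ) ≤ (N : ℝ) := by rw [hn_def]; exact_mod_cast hNN'.le
      exact mul_le_mul_of_nonneg_left this hα.le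
    have h := aux_diff hs hst
    have e1 : -α * (N : ℝ) = -(α * (N : ℝ)) := by ring
    have e2 : -α * (N' : ℝ) = -(α * n) := by rw [hn_def]; ring
    rw [e1, e2]
    exact h
  have hf_nonneg : ∀ α : ℝ, 0 < α → 0 ≤ f α := by
    intro α hα
    have : (0:ℝ) ≤ α ^ (p - 1) := Real.rpow_nonneg hα.le _
    positivity
  -- bound on (0, b]
  have hbound1 : ∀ α ∈ Ioc (0:ℝ) b, f α ≤ α ^ (p - 2) / n := by
    intro α hα
    obtain ⟨hα0, -⟩ := hα
    have hd := (hkey α hα0).trans (aux_tail (mul_pos hα0 hn0))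
    have h1 : f α ≤ 1 * α ^ (p - 1) * (1 / (α * n)) := by
      have he : Real.exp (-α) ≤ 1 := Real.exp_le_one_iff.mpr (by linarith)
      have hr : (0:ℝ) ≤ α ^ (p - 1) := Real.rpow_nonneg hα0.le _
      calc f α ≤ Real.exp (-α) * α ^ (p - 1) * (1 / (α * n)) := by
            apply mul_le_mul_of_nonneg_left hd (by positivity)
        _ ≤ 1 * α ^ (p - 1) * (1 / (α * n)) := by
            apply mul_le_mul_of_nonneg_right _ (by positivity)
            exact mul_le_mul_of_nonneg_right he hr
    have h2 : 1 * α ^ (p - 1) * (1 / (α * n)) = α ^ (p - 2) / n := by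
      have : α ^ (p - 1) = α ^ (p - 2) * α := by
        rw [← Real.rpow_add_one hα0.ne']
        congr 1; ring
      rw [this]; field_simp
    linarith [h1, h2.le]
  -- bound on (b, ∞)
  have hbound2 : ∀ α ∈ Ioi b, f α ≤
      (1 / (1 - Real.exp (-1))) * (α ^ (p - 1) * Real.exp (-((n + 1) * α))) := by
    intro α hα
    have hα0 : 0 < α := lt_trans hb hα
    have h1 : 1 ≤ α * n :=
      le_of_lt ((div_lt_iff₀ hn0).mp (by rwa [hb_def, Set.mem_Ioi] at hα))
    have hs : 0 < α * n := by linarith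
    have hmono : 1 - Real.exp (-1) ≤ 1 - Real.exp (-(α * n)) := by
      have : Real.exp (-(α * n)) ≤ Real.exp (-1) := Real.exp_le_exp.mpr (by linarith)
      linarith
    have hd : Real.exp (-(α * n)) / (1 - Real.exp (-(α * n))) ≤
        Real.exp (-(α * n)) / (1 - Real.exp (-1)) := by
      apply div_le_div_of_nonneg_left (Real.exp_pos _).le hc0 hmono
    have hr : (0:ℝ) ≤ α ^ (p - 1) := Real.rpow_nonneg hα0.le _
    have h2 : f α ≤ Real.exp (-α) * α ^ (p - 1) *
        (Real.exp (-(α * n)) / (1 - Real.exp (-1))) :=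
      mul_le_mul_of_nonneg_left ((hkey α hα0).trans hd) (by positivity)
    have h3 : Real.exp (-α) * α ^ (p - 1) * (Real.exp (-(α * n)) / (1 - Real.exp (-1))) =
        (1 / (1 - Real.exp (-1))) * (α ^ (p - 1) * Real.exp (-((n + 1) * α))) := by
      rw [show (-((n + 1) * α)) = -α + -(α * n) by ring, Real.exp_add]
      ring
    linarith [h2, h3.le]
  -- dominating functions and their integrability
  set c0 : ℝ := 1 / (1 - Real.exp (-1)) with hc0_def
  set g1 : ℝ → ℝ := fun x => x ^ (p - 2) / n with hg1_def
  set g2 : ℝ → ℝ := fun x => c0 * (x ^ (p - 1) * Real.exp (-((n + 1) * x))) with hg2_def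
  have hg1i : IntegrableOn g1 (Ioc 0 b) :=
    ((intervalIntegral.intervalIntegrable_rpow' (show (-1:ℝ) < p - 2 by linarith)).1).div_const n
  have hg2i0 : IntegrableOn g2 (Ioi 0) := by
    have h := integrableOn_rpow_mul_exp_neg_mul_rpow
      (show (-1:ℝ) < p - 1 by linarith) zero_lt_one (show (0:ℝ) < n + 1 by linarith)
    simp only [Real.rpow_one, neg_mul] at h
    exact (h.const_mul c0)
  have hg2i : IntegrableOn g2 (Ioi b) := hg2i0.mono_set (Ioi_subset_Ioi hb.le)
  -- f is integrable on each piece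
  have hfi1 : IntegrableOn f (Ioc 0 b) := by
    apply Integrable.mono hg1i (hfm.aestronglyMeasurable.restrict)
    rw [ae_restrict_iff' measurableSet_Ioc]
    filter_upwards with α hα
    rw [Real.norm_eq_abs, Real.norm_eq_abs, abs_of_nonneg (hf_nonneg α hα.1)]
    exact (hbound1 α hα).trans (le_abs_self _)
  have hfi2 : IntegrableOn f (Ioi b) := by
    apply Integrable.mono hg2i (hfm.aestronglyMeasurable.restrict)
    rw [ae_restrict_iff' measurableSet_Ioi]
    filter_upwards with α hα
    rw [Real.norm_eq_abs, Real.norm_eq_abs, abs_of_nonneg (hf_nonneg α (lt_trans hb hα))]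
    exact (hbound2 α hα).trans (le_abs_self _)
  -- split the integral
  have hsplit : ∫ α in Ioi (0:ℝ), f α = (∫ α in Ioc 0 b, f α) + ∫ α in Ioi b, f α := by
    rw [← setIntegral_union (Ioc_disjoint_Ioi le_rfl) measurableSet_Ioi hfi1 hfi2,
      Ioc_union_Ioi_eq_Ioi hb.le]
  -- estimate first piece
  have hI1 : (∫ α in Ioc 0 b, f α) ≤ (1 / (p - 1)) * n ^ (-p) := by
    have h1 : (∫ α in Ioc 0 b, f α) ≤ ∫ α in Ioc 0 b, g1 α :=
      setIntegral_mono_on hfi1 hg1i measurableSet_Ioc hbound1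
    have h2 : (∫ α in Ioc 0 b, g1 α) = (1 / (p - 1)) * n ^ (-p) := by
      rw [hg1_def]
      simp only [div_eq_mul_inv]
      rw [integral_mul_const, ← intervalIntegral.integral_of_le hb.le,
        integral_rpow (Or.inl (show (-1:ℝ) < p - 2 by linarith))]
      rw [Real.zero_rpow (by linarith : p - 2 + 1 ≠ 0)]
      have hbp : b ^ (p - 2 + 1) = n ^ (-(p - 1)) := by
        rw [hb_def, one_div, ← Real.rpow_neg_one n, ← Real.rpow_mul hn0.le]
        congr 1; ring
      have hnp : n ^ (-(p - 1)) * n⁻¹ = n ^ (-p) := by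
        rw [← Real.rpow_neg_one n, ← Real.rpow_add hn0]
        congr 1; ring
      rw [hbp, sub_zero, show p - 2 + 1 = p - 1 by ring, div_mul_eq_mul_div, hnp]
      ring
    linarith [h1, h2.le]
  -- estimate second piece
  have hI2 : (∫ α in Ioi b, f α) ≤ (Real.Gamma p / (1 - Real.exp (-1))) * n ^ (-p) := by
    have h1 : (∫ α in Ioi b, f α) ≤ ∫ α in Ioi b, g2 α :=
      setIntegral_mono_on hfi2 hg2i measurableSet_Ioi hbound2
    have h2 : (∫ α in Ioi b, g2 α) ≤ ∫ α in Ioi 0, g2 α := by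
      apply setIntegral_mono_set hg2i0
      · filter_upwards [ae_restrict_mem measurableSet_Ioi] with x hx
        have : (0:ℝ) ≤ x ^ (p - 1) := Real.rpow_nonneg (le_of_lt hx) _
        rw [hg2_def, hc0_def]
        positivity
      · exact HasSubset.Subset.eventuallyLE (Ioi_subset_Ioi hb.le)
    have h3 : (∫ α in Ioi 0, g2 α) = c0 * ((1 / (n + 1)) ^ p * Real.Gamma p) := by
      rw [hg2_def, integral_const_mul]
      congr 1
      exact Real.integral_rpow_mul_exp_neg_mul_Ioi hp0 (by linarith)
    have h4 : (1 / (n + 1)) ^ p ≤ n ^ (-p) := by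
      have e1 : (1 / n) ^ p = n ^ (-p) := by
        rw [one_div, ← Real.rpow_neg_one n, ← Real.rpow_mul hn0.le]
        congr 1; ring
      rw [← e1]
      exact Real.rpow_le_rpow (by positivity)
        (one_div_le_one_div_of_le hn0 (by linarith)) hp0.le
    have hc0nn : 0 ≤ c0 := by rw [hc0_def]; positivity
    have h5 : c0 * ((1 / (n + 1)) ^ p * Real.Gamma p) ≤
        (Real.Gamma p / (1 - Real.exp (-1))) * n ^ (-p) := by
      have := mul_le_mul_of_nonneg_left
        (mul_le_mul_of_nonneg_right h4 hΓ.le) hc0nn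
      calc c0 * ((1 / (n + 1)) ^ p * Real.Gamma p) ≤ c0 * (n ^ (-p) * Real.Gamma p) := this
        _ = (Real.Gamma p / (1 - Real.exp (-1))) * n ^ (-p) := by rw [hc0_def]; ring
    linarith
  calc (∫ α in Ioi (0:ℝ), f α)
      = (∫ α in Ioc 0 b, f α) + ∫ α in Ioi b, f α := hsplit
    _ ≤ (1 / (p - 1)) * n ^ (-p) + (Real.Gamma p / (1 - Real.exp (-1))) * n ^ (-p) :=
        add_le_add hI1 hI2
    _ = (1 / (p - 1) + Real.Gamma p / (1 - Real.exp (-1))) * n ^ (-p) := by ring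
end

section
/- Suppose E : ℕ → ℝ satisfies E(M·N) = M·E(N) whenever the argument is interpreted by periodic extension, and define F_N(σ) = E_N(σ) − N·e* for a fixed real e*. If for every N that is a multiple of 2h* one has E_N(σ) − N·e* > Δ for all σ other than the ground state, then for arbitrary N and any σ that is not a translate of the 2h*-periodic ground state, F_N(σ) ≥ Δ/(2h*). -/
theorem renormalized_energy_strictly_positive
    (hstar : ℕ) (hhstar : 0 < hstar)
    (E : ℕ → (ℤ → ℤ) → ℝ) (estar Δ : ℝ) (hΔ : 0 < Δ)
    (gstate : ℤ → ℤ)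
    (hscale : ∀ (M N : ℕ) (σ : ℤ → ℤ), (∀ i : ℤ, σ (i + N) = σ i) →
      E (M * N) σ = M * E N σ)
    (hgap : ∀ N : ℕ, 0 < N → (2 * hstar) ∣ N → ∀ σ : ℤ → ℤ,
      (∀ i : ℤ, σ (i + N) = σ i) →
      (¬ ∃ τ : ℤ, ∀ i : ℤ, σ i = gstate (i + τ)) →
      E N σ - N * estar > Δ) :
    ∀ N : ℕ, 0 < N → ∀ σ : ℤ → ℤ, (∀ i : ℤ, σ (i + N) = σ i) →
      (¬ ∃ τ : ℤ, ∀ i : ℤ, σ i = gstate (i + τ)) →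
      E N σ - N * estar ≥ Δ / (2 * hstar) := by
  intro N hN σ hper hnot
  have hperk : ∀ (k : ℕ) (i : ℤ), σ (i + k * N) = σ i := by
    intro k
    induction k with
    | zero => simp
    | succ k ih =>
      intro i
      have : ((k + 1 : ℕ) : ℤ) * N = k * N + N := by push_cast; ring
      rw [this, ← add_assoc, hper, ih]
  have hper2 : ∀ i : ℤ, σ (i + ((2 * hstar * N : ℕ) : ℤ)) = σ i := by
    intro i
    have := hperk (2 * hstar) i
    rwa [Nat.cast_mul] at this
  have hgap' := hgap (2 * hstar * N) (by positivity) ⟨N, rfl⟩ σ hper2 hnot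
  have hsc := hscale (2 * hstar) N σ hper
  rw [hsc] at hgap'
  push_cast at hgap'
  have h2 : (0 : ℝ) < 2 * hstar := by positivity
  rw [ge_iff_le, div_le_iff₀ h2]
  nlinarith [hgap']
end

section
/- Let p > 1, h ≥ 1, D ≥ 1 be fixed. There exists C > 0 such that for all positive integers M < M', ∫_0^∞ e^(-α) α^(p-1) e^(-αMh) (1 - e^(-α(M'-M)h)) / ((1 - e^(-α(D+Mh)))(1 - e^(-α(D+M'h)))) dα ≤ C · M^(-p). -/
open MeasureTheory Real

set_option maxHeartbeats 1000000

private lemma loc_aux_nonneg (p a dd mm mm' hr : ℝ) (ha : 0 < a) (hdd : 1 ≤ dd)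
    (hmm : 1 ≤ mm) (hmm' : mm < mm') (hhr : 1 ≤ hr) :
    0 ≤ Real.exp (-a) * a ^ (p - 1) * Real.exp (-a * mm * hr) *
        (1 - Real.exp (-a * (mm' - mm) * hr)) /
        ((1 - Real.exp (-a * (dd + mm * hr))) * (1 - Real.exp (-a * (dd + mm' * hr)))) := by
  have hmm0 : (0:ℝ) < mm := by linarith
  have hhr0 : (0:ℝ) < hr := by linarith
  have hd1 : (0:ℝ) < dd + mm * hr := by nlinarith [mul_pos hmm0 hhr0]
  have hd2 : (0:ℝ) < dd + mm' * hr := by nlinarith [mul_pos (by linarith : (0:ℝ) < mm') hhr0]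
  have h1 : Real.exp (-a * (mm' - mm) * hr) ≤ 1 := by
    rw [Real.exp_le_one_iff]
    nlinarith [mul_pos (mul_pos ha (by linarith : (0:ℝ) < mm' - mm)) hhr0]
  have h2 : Real.exp (-a * (dd + mm * hr)) < 1 := by
    rw [Real.exp_lt_one_iff]
    nlinarith [mul_pos ha hd1]
  have h3 : Real.exp (-a * (dd + mm' * hr)) < 1 := by
    rw [Real.exp_lt_one_iff]
    nlinarith [mul_pos ha hd2]
  apply div_nonneg
  · exact mul_nonneg (by positivity) (by linarith)
  · exact mul_nonneg (by linarith) (by linarith)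

private lemma loc_aux_bound (p a dd mm mm' hr : ℝ) (hp : 1 < p) (ha : 0 < a) (hdd : 1 ≤ dd)
    (hmm : 1 ≤ mm) (hmm' : mm < mm') (hhr : 1 ≤ hr) :
    Real.exp (-a) * a ^ (p - 1) * Real.exp (-a * mm * hr) *
        (1 - Real.exp (-a * (mm' - mm) * hr)) /
        ((1 - Real.exp (-a * (dd + mm * hr))) * (1 - Real.exp (-a * (dd + mm' * hr)))) ≤
      a ^ (p - 1) * Real.exp (-((1 + mm) * a)) +
        (1 / mm) * (a ^ (p - 2) * Real.exp (-((1 + mm) * a))) := by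
  set A : ℝ := Real.exp (-a) * a ^ (p - 1) * Real.exp (-a * mm * hr) with hAdef
  have hA0 : 0 ≤ A := by positivity
  set e1 : ℝ := 1 - Real.exp (-a * (dd + mm * hr)) with he1def
  set e2 : ℝ := 1 - Real.exp (-a * (dd + mm' * hr)) with he2def
  set n : ℝ := 1 - Real.exp (-a * (mm' - mm) * hr) with hndef
  have hmm0 : (0:ℝ) < mm := by linarith
  have hhr0 : (0:ℝ) < hr := by linarith
  have hd1 : (0:ℝ) < dd + mm * hr := by nlinarith [mul_pos hmm0 hhr0]
  have hd2 : (0:ℝ) < dd + mm' * hr := by nlinarith [mul_pos (by linarith : (0:ℝ) < mm') hhr0]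
  have he1 : 0 < e1 := by
    have : Real.exp (-a * (dd + mm * hr)) < 1 := by
      rw [Real.exp_lt_one_iff]; nlinarith [mul_pos ha hd1]
    rw [he1def]; linarith
  have he2 : 0 < e2 := by
    have : Real.exp (-a * (dd + mm' * hr)) < 1 := by
      rw [Real.exp_lt_one_iff]; nlinarith [mul_pos ha hd2]
    rw [he2def]; linarith
  have hn2 : n ≤ e2 := by
    have hle : -a * (dd + mm' * hr) ≤ -a * (mm' - mm) * hr := by
      nlinarith [mul_pos ha hd1]
    have := Real.exp_le_exp.mpr hle
    rw [hndef, he2def]; linarith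
  -- step 1 : drop the second factor
  have step1 : A * n / (e1 * e2) ≤ A / e1 := by
    rw [div_le_div_iff₀ (by positivity) he1]
    have h1 : A * n ≤ A * e2 := mul_le_mul_of_nonneg_left hn2 hA0
    nlinarith [mul_le_mul_of_nonneg_right h1 he1.le]
  -- step 2 : 1/e1 ≤ (1+x1)/x1 with x1 = a*(dd+mm*hr)
  set x1 : ℝ := a * (dd + mm * hr) with hx1def
  have hx1 : 0 < x1 := by rw [hx1def]; exact mul_pos ha hd1
  have hfrac : x1 ≤ (1 + x1) * e1 := by
    have hxe : Real.exp (-a * (dd + mm * hr)) = Real.exp (-x1) := by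
      rw [hx1def, neg_mul]
    have h1 : (1 + x1) * Real.exp (-x1) ≤ 1 := by
      have h2 : 1 + x1 ≤ Real.exp x1 := by linarith [Real.add_one_le_exp x1]
      have h3 : (1 + x1) * Real.exp (-x1) ≤ Real.exp x1 * Real.exp (-x1) :=
        mul_le_mul_of_nonneg_right h2 (Real.exp_pos _).le
      have h4 : Real.exp x1 * Real.exp (-x1) = 1 := by
        rw [← Real.exp_add]; simp
      linarith
    have he1' : e1 = 1 - Real.exp (-x1) := by rw [he1def, hxe]
    rw [he1']
    nlinarith [h1]
  have step2 : A / e1 ≤ A * (1 + x1) / x1 := by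
    rw [div_le_div_iff₀ he1 hx1]
    nlinarith [mul_le_mul_of_nonneg_left hfrac hA0]
  -- step 3 : split and bound each term
  have hE : Real.exp (-a) * Real.exp (-a * mm * hr) ≤ Real.exp (-((1 + mm) * a)) := by
    rw [← Real.exp_add, Real.exp_le_exp]
    nlinarith [mul_nonneg (mul_nonneg ha.le (by linarith : (0:ℝ) ≤ mm))
      (by linarith : (0:ℝ) ≤ hr - 1)]
  have hT1 : A ≤ a ^ (p - 1) * Real.exp (-((1 + mm) * a)) := by
    calc A = a ^ (p - 1) * (Real.exp (-a) * Real.exp (-a * mm * hr)) := by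
          rw [hAdef]; ring
      _ ≤ a ^ (p - 1) * Real.exp (-((1 + mm) * a)) :=
          mul_le_mul_of_nonneg_left hE (Real.rpow_nonneg ha.le _)
  have hpow : a ^ (p - 1) = a ^ (p - 2) * a := by
    rw [show p - 1 = (p - 2) + 1 by ring, Real.rpow_add_one ha.ne']
  have hT2 : A / x1 ≤ (1 / mm) * (a ^ (p - 2) * Real.exp (-((1 + mm) * a))) := by
    have hAx : A / x1 = (Real.exp (-a) * Real.exp (-a * mm * hr) * a ^ (p - 2)) *
        (1 / (dd + mm * hr)) := by
      rw [hAdef, hx1def, hpow]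
      field_simp
    rw [hAx]
    have h1 : Real.exp (-a) * Real.exp (-a * mm * hr) * a ^ (p - 2) ≤
        Real.exp (-((1 + mm) * a)) * a ^ (p - 2) :=
      mul_le_mul_of_nonneg_right hE (Real.rpow_nonneg ha.le _)
    have h2 : 1 / (dd + mm * hr) ≤ 1 / mm := by
      apply one_div_le_one_div_of_le (by linarith)
      nlinarith [mul_nonneg (by linarith : (0:ℝ) ≤ mm) (by linarith : (0:ℝ) ≤ hr - 1)]
    calc Real.exp (-a) * Real.exp (-a * mm * hr) * a ^ (p - 2) * (1 / (dd + mm * hr)) ≤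
          Real.exp (-((1 + mm) * a)) * a ^ (p - 2) * (1 / mm) := by
          apply mul_le_mul h1 h2 (by positivity) (by positivity)
      _ = (1 / mm) * (a ^ (p - 2) * Real.exp (-((1 + mm) * a))) := by ring
  have hsplit : A * (1 + x1) / x1 = A + A / x1 := by
    field_simp
    ring
  calc A * n / (e1 * e2) ≤ A / e1 := step1
    _ ≤ A * (1 + x1) / x1 := step2
    _ = A + A / x1 := hsplit
    _ ≤ a ^ (p - 1) * Real.exp (-((1 + mm) * a)) +
        (1 / mm) * (a ^ (p - 2) * Real.exp (-((1 + mm) * a))) := add_le_add hT1 hT2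

theorem localization_integral_estimate (p : ℝ) (hp : 1 < p) (h D : ℕ)
    (hh : 1 ≤ h) (hD : 1 ≤ D) :
    ∃ C : ℝ, 0 < C ∧ ∀ M M' : ℕ, 0 < M → M < M' →
      (∫ α in Set.Ioi (0 : ℝ),
          Real.exp (-α) * α ^ (p - 1) * Real.exp (-α * M * h) *
            (1 - Real.exp (-α * (M' - M : ℕ) * h)) /
            ((1 - Real.exp (-α * (D + M * h))) * (1 - Real.exp (-α * (D + M' * h))))) ≤
        C * (M : ℝ) ^ (-p) := by
  have hGp : 0 < Real.Gamma p := Real.Gamma_pos_of_pos (by linarith)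
  have hGp1 : 0 < Real.Gamma (p - 1) := Real.Gamma_pos_of_pos (by linarith)
  refine ⟨Real.Gamma p + Real.Gamma (p - 1), by positivity, ?_⟩
  intro M M' hM hMM'
  have hMr1 : (1 : ℝ) ≤ (M : ℝ) := by exact_mod_cast hM
  have hMr0 : (0 : ℝ) < (M : ℝ) := by linarith
  have hhr : (1 : ℝ) ≤ (h : ℝ) := by exact_mod_cast hh
  have hDr : (1 : ℝ) ≤ (D : ℝ) := by exact_mod_cast hD
  have hM'r : (M : ℝ) < (M' : ℝ) := by exact_mod_cast hMM'
  have hsub : ((M' - M : ℕ) : ℝ) = (M' : ℝ) - (M : ℝ) := Nat.cast_sub hMM'.le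
  have hb : (0 : ℝ) < 1 + (M : ℝ) := by linarith
  set g : ℝ → ℝ := fun a =>
    a ^ (p - 1) * Real.exp (-((1 + (M : ℝ)) * a)) +
      (1 / (M : ℝ)) * (a ^ (p - 2) * Real.exp (-((1 + (M : ℝ)) * a))) with hg
  have hi1 : IntegrableOn (fun a : ℝ => a ^ (p - 1) * Real.exp (-((1 + (M : ℝ)) * a)))
      (Set.Ioi 0) := by
    have := integrableOn_rpow_mul_exp_neg_mul_rpow (s := p - 1) (p := 1) (b := 1 + (M : ℝ))
      (by linarith) zero_lt_one hb
    exact this.congr_fun (fun x hx => by dsimp only; rw [Real.rpow_one, neg_mul]) measurableSet_Ioi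
  have hi2 : IntegrableOn (fun a : ℝ => a ^ (p - 2) * Real.exp (-((1 + (M : ℝ)) * a)))
      (Set.Ioi 0) := by
    have := integrableOn_rpow_mul_exp_neg_mul_rpow (s := p - 2) (p := 1) (b := 1 + (M : ℝ))
      (by linarith) zero_lt_one hb
    exact this.congr_fun (fun x hx => by dsimp only; rw [Real.rpow_one, neg_mul]) measurableSet_Ioi
  have hig : IntegrableOn g (Set.Ioi 0) := hi1.add (hi2.const_mul _)
  have I1 : ∫ a in Set.Ioi (0 : ℝ), a ^ (p - 1) * Real.exp (-((1 + (M : ℝ)) * a)) =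
      (1 / (1 + (M : ℝ))) ^ p * Real.Gamma p :=
    Real.integral_rpow_mul_exp_neg_mul_Ioi (by linarith) hb
  have I2 : ∫ a in Set.Ioi (0 : ℝ), a ^ (p - 2) * Real.exp (-((1 + (M : ℝ)) * a)) =
      (1 / (1 + (M : ℝ))) ^ (p - 1) * Real.Gamma (p - 1) := by
    have := Real.integral_rpow_mul_exp_neg_mul_Ioi (a := p - 1) (r := 1 + (M : ℝ))
      (by linarith) hb
    rw [show p - 2 = p - 1 - 1 by ring]
    exact this
  have Ig : ∫ a in Set.Ioi (0 : ℝ), g a =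
      (1 / (1 + (M : ℝ))) ^ p * Real.Gamma p +
        (1 / (M : ℝ)) * ((1 / (1 + (M : ℝ))) ^ (p - 1) * Real.Gamma (p - 1)) := by
    rw [hg]
    rw [integral_add hi1 (hi2.const_mul _), integral_const_mul, I1, I2]
  have hmono : (∫ α in Set.Ioi (0 : ℝ),
      Real.exp (-α) * α ^ (p - 1) * Real.exp (-α * M * h) *
        (1 - Real.exp (-α * (M' - M : ℕ) * h)) /
        ((1 - Real.exp (-α * (D + M * h))) * (1 - Real.exp (-α * (D + M' * h))))) ≤
      ∫ a in Set.Ioi (0 : ℝ), g a := by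
    apply integral_mono_of_nonneg
    · refine (ae_restrict_iff' measurableSet_Ioi).mpr (Filter.Eventually.of_forall
        fun a ha => ?_)
      have := loc_aux_nonneg p a (D : ℝ) (M : ℝ) (M' : ℝ) (h : ℝ) ha hDr hMr1 hM'r hhr
      rw [← hsub] at this
      simpa using this
    · exact hig
    · refine (ae_restrict_iff' measurableSet_Ioi).mpr (Filter.Eventually.of_forall
        fun a ha => ?_)
      have := loc_aux_bound p a (D : ℝ) (M : ℝ) (M' : ℝ) (h : ℝ) hp ha hDr hMr1 hM'r hhr
      rw [← hsub] at this
      simpa [hg, one_div] using this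
  have hkey : (1 / (M : ℝ)) ^ p = (M : ℝ) ^ (-p) := by
    rw [one_div, Real.inv_rpow hMr0.le, ← Real.rpow_neg hMr0.le]
  have hle1 : (1 / (1 + (M : ℝ))) ^ p ≤ (1 / (M : ℝ)) ^ p := by
    apply Real.rpow_le_rpow (by positivity) _ (by linarith)
    apply one_div_le_one_div_of_le hMr0
    linarith
  have hle2 : (1 / (1 + (M : ℝ))) ^ (p - 1) ≤ (1 / (M : ℝ)) ^ (p - 1) := by
    apply Real.rpow_le_rpow (by positivity) _ (by linarith)
    apply one_div_le_one_div_of_le hMr0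
    linarith
  have hprod : (1 / (M : ℝ)) * (1 / (M : ℝ)) ^ (p - 1) = (1 / (M : ℝ)) ^ p := by
    nth_rewrite 1 [← Real.rpow_one (1 / (M : ℝ))]
    rw [← Real.rpow_add (by positivity)]
    norm_num
  calc (∫ α in Set.Ioi (0 : ℝ),
      Real.exp (-α) * α ^ (p - 1) * Real.exp (-α * M * h) *
        (1 - Real.exp (-α * (M' - M : ℕ) * h)) /
        ((1 - Real.exp (-α * (D + M * h))) * (1 - Real.exp (-α * (D + M' * h))))) ≤
      ∫ a in Set.Ioi (0 : ℝ), g a := hmono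
    _ = (1 / (1 + (M : ℝ))) ^ p * Real.Gamma p +
        (1 / (M : ℝ)) * ((1 / (1 + (M : ℝ))) ^ (p - 1) * Real.Gamma (p - 1)) := Ig
    _ ≤ (1 / (M : ℝ)) ^ p * Real.Gamma p +
        (1 / (M : ℝ)) * ((1 / (M : ℝ)) ^ (p - 1) * Real.Gamma (p - 1)) := by
        have t1 : (1 / (1 + (M : ℝ))) ^ p * Real.Gamma p ≤
            (1 / (M : ℝ)) ^ p * Real.Gamma p :=
          mul_le_mul_of_nonneg_right hle1 hGp.le
        have t2 : (1 / (M : ℝ)) * ((1 / (1 + (M : ℝ))) ^ (p - 1) * Real.Gamma (p - 1)) ≤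
            (1 / (M : ℝ)) * ((1 / (M : ℝ)) ^ (p - 1) * Real.Gamma (p - 1)) := by
          apply mul_le_mul_of_nonneg_left _ (by positivity)
          exact mul_le_mul_of_nonneg_right hle2 hGp1.le
        linarith
    _ = (Real.Gamma p + Real.Gamma (p - 1)) * (M : ℝ) ^ (-p) := by
        rw [← hkey, ← hprod]
        ring
end

section
/- Let p > 1. For fixed positive integers h and M, the function N ↦ ∫_0^∞ e^(-α) α^(p-1) (1-e^(-αh))^2 e^(-α(N-h)) / ((1-e^(-α))^2 (1 - e^(-αN))) dα is well-defined for N ≥ 2h and is O(N^(-p)) as N → ∞; that is, there exists C > 0 with the integral ≤ C N^(-p) for all N ≥ 2h. -/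
open MeasureTheory Real

private lemma one_sub_pow_le_nat_mul {x : ℝ} (h0 : 0 ≤ x) (h1 : x ≤ 1) :
    ∀ n : ℕ, 1 - x ^ n ≤ n * (1 - x)
  | 0 => by simp
  | (n + 1) => by
      have ih := one_sub_pow_le_nat_mul h0 h1 n
      have hxn : 0 ≤ x ^ n := pow_nonneg h0 n
      have hxn1 : x ^ n ≤ 1 := pow_le_one₀ h0 h1
      have hs : x ^ (n + 1) = x * x ^ n := pow_succ' x n
      push_cast
      nlinarith [mul_nonneg (sub_nonneg.2 h1) (sub_nonneg.2 hxn1)]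

private lemma one_div_one_sub_exp_le {u : ℝ} (hu : 0 < u) :
    1 / (1 - Real.exp (-u)) ≤ 1 + 1 / u := by
  have hE : 0 < Real.exp u := Real.exp_pos u
  have h1 : 0 < 1 - Real.exp (-u) := by
    have := Real.exp_lt_one_iff.2 (neg_neg_iff_pos.2 hu)
    linarith
  have h2 : u + 1 ≤ Real.exp u := Real.add_one_le_exp u
  rw [div_le_iff₀ h1, Real.exp_neg]
  have hu' : u ≠ 0 := ne_of_gt hu
  have hE' : Real.exp u ≠ 0 := ne_of_gt hE
  field_simp
  nlinarith

set_option maxHeartbeats 1000000 in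
theorem wraparound_self_interaction (p : ℝ) (hp : 1 < p) (h : ℕ) (hh : 0 < h) :
    ∃ C : ℝ, 0 < C ∧ ∀ N : ℕ, 2 * h ≤ N →
      IntegrableOn
        (fun α : ℝ =>
          Real.exp (-α) * α ^ (p - 1) * (1 - Real.exp (-α * h)) ^ 2 *
              Real.exp (-α * ((N : ℝ) - h)) /
            ((1 - Real.exp (-α)) ^ 2 * (1 - Real.exp (-α * N))))
        (Set.Ioi (0 : ℝ)) ∧
      (∫ α in Set.Ioi (0 : ℝ),
          Real.exp (-α) * α ^ (p - 1) * (1 - Real.exp (-α * h)) ^ 2 *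
              Real.exp (-α * ((N : ℝ) - h)) /
            ((1 - Real.exp (-α)) ^ 2 * (1 - Real.exp (-α * N)))) ≤
        C * (N : ℝ) ^ (-p) := by
  have hp0 : 0 < p := by linarith
  have hp1 : 0 < p - 1 := by linarith
  have hΓp : 0 < Real.Gamma p := Real.Gamma_pos_of_pos hp0
  have hΓp1 : 0 < Real.Gamma (p - 1) := Real.Gamma_pos_of_pos hp1
  refine ⟨(h : ℝ) ^ 2 * ((2 : ℝ) ^ p * Real.Gamma p + (2 : ℝ) ^ (p - 1) * Real.Gamma (p - 1)),
    ?_, ?_⟩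
  · have hh' : (0 : ℝ) < (h : ℝ) := by exact_mod_cast hh
    positivity
  intro N hN
  have hN0 : 0 < N := lt_of_lt_of_le (by omega) hN
  have hNR : (0 : ℝ) < (N : ℝ) := by exact_mod_cast hN0
  have hNR' : (N : ℝ) ≠ 0 := ne_of_gt hNR
  have hhR : (0 : ℝ) < (h : ℝ) := by exact_mod_cast hh
  have hNh : 2 * (h : ℝ) ≤ (N : ℝ) := by exact_mod_cast hN
  set b : ℝ := (N : ℝ) / 2 with hb_def
  have hb : 0 < b := by positivity
  set f : ℝ → ℝ := fun α : ℝ =>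
    Real.exp (-α) * α ^ (p - 1) * (1 - Real.exp (-α * h)) ^ 2 *
        Real.exp (-α * ((N : ℝ) - h)) /
      ((1 - Real.exp (-α)) ^ 2 * (1 - Real.exp (-α * N))) with hf_def
  set g : ℝ → ℝ := fun α : ℝ =>
    (h : ℝ) ^ 2 * (α ^ (p - 1) * Real.exp (-(b * α))) +
      ((h : ℝ) ^ 2 / N) * (α ^ (p - 2) * Real.exp (-(b * α))) with hg_def
  -- integrability of the two pieces of g
  have hint : ∀ s : ℝ, -1 < s →
      IntegrableOn (fun α : ℝ => α ^ s * Real.exp (-(b * α))) (Set.Ioi 0) := by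
    intro s hs
    have := integrableOn_rpow_mul_exp_neg_mul_rpow hs (zero_lt_one : (0:ℝ) < 1) hb
    refine this.congr_fun (fun x hx => ?_) measurableSet_Ioi
    simp only [Real.rpow_one, neg_mul]
  have hint1 := hint (p - 1) (by linarith)
  have hint2 := hint (p - 2) (by linarith)
  have hg_int : IntegrableOn g (Set.Ioi 0) :=
    (hint1.const_mul _).add (hint2.const_mul _)
  -- pointwise facts
  have hfg : ∀ α ∈ Set.Ioi (0 : ℝ), 0 ≤ f α ∧ f α ≤ g α := by
    intro α hα
    have hα0 : (0 : ℝ) < α := hα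
    set e : ℝ := Real.exp (-α) with he_def
    have he0 : 0 < e := Real.exp_pos _
    have he1 : e < 1 := Real.exp_lt_one_iff.2 (by linarith)
    have heh : Real.exp (-α * h) = e ^ h := by
      rw [show -α * (h : ℝ) = (h : ℝ) * (-α) by ring, Real.exp_nat_mul]
    have heN : Real.exp (-α * N) = e ^ N := by
      rw [show -α * (N : ℝ) = (N : ℝ) * (-α) by ring, Real.exp_nat_mul]
    have hA : 0 < 1 - e := by linarith
    have hAh : 0 < 1 - e ^ h := by
      have hpow : e ^ h < 1 := pow_lt_one₀ he0.le he1 hh.ne'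
      linarith
    have hAN : 0 < 1 - e ^ N := by
      have : e ^ N < 1 := pow_lt_one₀ he0.le he1 (by omega)
      linarith
    have h1 : 1 - e ^ h ≤ (h : ℝ) * (1 - e) := one_sub_pow_le_nat_mul he0.le he1.le h
    have h2 : (1 - e ^ h) ^ 2 ≤ (h : ℝ) ^ 2 * (1 - e) ^ 2 := by nlinarith
    have h3 : 1 / (1 - e ^ N) ≤ 1 + 1 / (α * N) := by
      have := one_div_one_sub_exp_le (mul_pos hα0 hNR)
      rwa [show -(α * (N : ℝ)) = -α * N by ring, heN] at this
    have h3' : 1 ≤ (1 + 1 / (α * (N : ℝ))) * (1 - e ^ N) := by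
      rw [div_le_iff₀ hAN] at h3
      linarith [h3]
    have hE : Real.exp (-α * ((N : ℝ) - h)) ≤ Real.exp (-(b * α)) := by
      apply Real.exp_le_exp.2
      rw [hb_def]
      nlinarith
    have hEpos : (0:ℝ) ≤ Real.exp (-α * ((N : ℝ) - h)) := (Real.exp_pos _).le
    have hαp : (0:ℝ) ≤ α ^ (p - 1) := Real.rpow_nonneg hα0.le _
    constructor
    · have hnum : 0 ≤ Real.exp (-α) * α ^ (p - 1) * (1 - Real.exp (-α * h)) ^ 2 *
          Real.exp (-α * ((N : ℝ) - h)) :=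
        mul_nonneg (mul_nonneg (mul_nonneg (Real.exp_pos _).le hαp) (sq_nonneg _)) hEpos
      have hden : 0 ≤ (1 - Real.exp (-α)) ^ 2 * (1 - Real.exp (-α * N)) := by
        rw [heN]; exact mul_nonneg (sq_nonneg _) hAN.le
      exact div_nonneg hnum hden
    · have key : (1 - e ^ h) ^ 2 / ((1 - e) ^ 2 * (1 - e ^ N)) ≤
          (h : ℝ) ^ 2 * (1 + 1 / (α * N)) := by
        rw [div_le_iff₀ (by positivity)]
        nlinarith [mul_le_mul_of_nonneg_left h3'
          (show (0:ℝ) ≤ (h : ℝ) ^ 2 * (1 - e) ^ 2 by positivity)]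
      have step1 : f α ≤ (α ^ (p - 1) * Real.exp (-(b * α))) *
          ((h : ℝ) ^ 2 * (1 + 1 / (α * N))) := by
        have hfform : f α = (e * α ^ (p - 1) * Real.exp (-α * ((N : ℝ) - h))) *
            ((1 - e ^ h) ^ 2 / ((1 - e) ^ 2 * (1 - e ^ N))) := by
          simp only [hf_def, heh, heN, he_def]
          ring
        rw [hfform]
        have hfac1 : e * α ^ (p - 1) * Real.exp (-α * ((N : ℝ) - h)) ≤
            α ^ (p - 1) * Real.exp (-(b * α)) := by
          calc e * α ^ (p - 1) * Real.exp (-α * ((N : ℝ) - h))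
              ≤ 1 * α ^ (p - 1) * Real.exp (-(b * α)) := by
                apply mul_le_mul (mul_le_mul he1.le le_rfl hαp zero_le_one) hE hEpos
                positivity
            _ = α ^ (p - 1) * Real.exp (-(b * α)) := by ring
        apply mul_le_mul hfac1 key (by positivity) (by positivity)
      refine step1.trans (le_of_eq ?_)
      have ha2 : α ^ (p - 2) = α ^ (p - 1) / α := by
        rw [show p - 2 = (p - 1) - 1 by ring, Real.rpow_sub hα0, Real.rpow_one]
      have hα' : α ≠ 0 := ne_of_gt hα0
      have hgα : g α = (h : ℝ) ^ 2 * (α ^ (p - 1) * Real.exp (-(b * α))) +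
          ((h : ℝ) ^ 2 / N) * ((α ^ (p - 1) / α) * Real.exp (-(b * α))) := by
        rw [hg_def]; simp only; rw [ha2]
      rw [hgα]
      field_simp
  -- measurability of f on Ioi 0
  have hf_cont : ContinuousOn f (Set.Ioi 0) := by
    apply ContinuousOn.div
    · apply ContinuousOn.mul
      apply ContinuousOn.mul
      apply ContinuousOn.mul
      · exact (Real.continuous_exp.comp continuous_neg).continuousOn
      · exact fun x hx =>
          (Real.continuousAt_rpow_const x _ (Or.inl (ne_of_gt hx))).continuousWithinAt
      · exact ((continuous_const.sub (Real.continuous_exp.comp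
          (continuous_neg.mul continuous_const))).pow 2).continuousOn
      · exact (Real.continuous_exp.comp
          ((continuous_neg).mul continuous_const)).continuousOn
    · exact (((continuous_const.sub (Real.continuous_exp.comp continuous_neg)).pow 2).mul
        (continuous_const.sub (Real.continuous_exp.comp
          (continuous_neg.mul continuous_const)))).continuousOn
    · intro x hx
      have hx0 : (0:ℝ) < x := hx
      have hA : Real.exp (-x) < 1 := Real.exp_lt_one_iff.2 (by linarith)
      have hAN : Real.exp (-x * N) < 1 := Real.exp_lt_one_iff.2 (by nlinarith)
      have hpos : (0:ℝ) < (1 - Real.exp (-x)) ^ 2 * (1 - Real.exp (-x * N)) := by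
        exact mul_pos (pow_pos (by linarith) 2) (by linarith)
      exact ne_of_gt hpos
  have hf_meas : AEStronglyMeasurable f (volume.restrict (Set.Ioi 0)) :=
    hf_cont.aestronglyMeasurable measurableSet_Ioi
  have hf_int : IntegrableOn f (Set.Ioi 0) := by
    apply Integrable.mono' hg_int hf_meas
    refine (ae_restrict_iff' measurableSet_Ioi).2 (Filter.Eventually.of_forall fun x hx => ?_)
    obtain ⟨h0, h1⟩ := hfg x hx
    rw [Real.norm_eq_abs, abs_of_nonneg h0]
    exact h1
  refine ⟨hf_int, ?_⟩
  have hmono : (∫ α in Set.Ioi (0:ℝ), f α) ≤ ∫ α in Set.Ioi (0:ℝ), g α :=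
    setIntegral_mono_on hf_int hg_int measurableSet_Ioi (fun x hx => (hfg x hx).2)
  refine hmono.trans ?_
  -- compute the integral of g
  have hI1 : (∫ α in Set.Ioi (0:ℝ), α ^ (p - 1) * Real.exp (-(b * α)))
      = (1 / b) ^ p * Real.Gamma p := Real.integral_rpow_mul_exp_neg_mul_Ioi hp0 hb
  have hI2 : (∫ α in Set.Ioi (0:ℝ), α ^ (p - 2) * Real.exp (-(b * α)))
      = (1 / b) ^ (p - 1) * Real.Gamma (p - 1) := by
    have := Real.integral_rpow_mul_exp_neg_mul_Ioi hp1 hb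
    rw [show p - 1 - 1 = p - 2 by ring] at this
    exact this
  have hgval : (∫ α in Set.Ioi (0:ℝ), g α)
      = (h : ℝ) ^ 2 * ((1 / b) ^ p * Real.Gamma p)
        + ((h : ℝ) ^ 2 / N) * ((1 / b) ^ (p - 1) * Real.Gamma (p - 1)) := by
    simp only [hg_def]
    rw [integral_add (hint1.const_mul _) (hint2.const_mul _),
      integral_const_mul, integral_const_mul, hI1, hI2]
  rw [hgval]
  have hbinv : (1 : ℝ) / b = 2 / N := by
    rw [hb_def]; field_simp
  have e1 : ((1:ℝ) / b) ^ p = 2 ^ p * (N : ℝ) ^ (-p) := by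
    rw [hbinv, Real.div_rpow (by norm_num) hNR.le, Real.rpow_neg hNR.le, div_eq_mul_inv]
  have e2 : ((1:ℝ) / b) ^ (p - 1) = 2 ^ (p - 1) * (N : ℝ) ^ (-(p - 1)) := by
    rw [hbinv, Real.div_rpow (by norm_num) hNR.le, Real.rpow_neg hNR.le, div_eq_mul_inv]
  have e3 : (N : ℝ) ^ (-(p - 1)) / N = (N : ℝ) ^ (-p) := by
    rw [show -p = -(p - 1) + (-1) by ring, Real.rpow_add hNR, Real.rpow_neg_one,
      div_eq_mul_inv]
  rw [e1, e2]
  apply le_of_eq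
  rw [← e3]
  field_simp
end
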